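/- arXiv:1109.4614 — 3 statements merged into one kernel-verified Lean document; each statement's English description precedes it below -/
import Mathlib

section
/- Let f : [a,b] → ℝ^N be differentiable at t with f'(t) ≠ 0, and let ε > 0. Then for all sufficiently small δ > 0 and for any point x ∈ ℝ^N sufficiently close to f(t) - δ f'(t), one has x ≠ f(t) and the derivative at t of the function s ↦ |f(s) - x| is at least |f'(t)| - ε. -/
/-!
The derivative of `s ↦ ‖f s - x‖` at `t` is `⟪f t - x, f'⟫ / ‖f t - x‖`, which depends only on the
direction of `f t - x`. The function `w ↦ ⟪w, u⟫ / ‖w‖` is continuous at `u ≠ 0` with value `‖u‖`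
and invariant under positive scaling, so it exceeds `‖u‖ - ε` on a cone `‖w - δ • u‖ < δ * ρ`;
take `u = f'`, `w = f t - x`. In particular every `δ > 0` works.
-/

open RealInnerProductSpace Filter Topology

variable {E : Type*} [NormedAddCommGroup E] [InnerProductSpace ℝ E]

theorem HasDerivAt.norm {f : ℝ → E} {f' : E} {t : ℝ} (hf : HasDerivAt f f' t) (h0 : f t ≠ 0) :
    HasDerivAt (fun s => ‖f s‖) (⟪f t, f'⟫ / ‖f t‖) t := by
  have h0' : ‖f t‖ ^ 2 ≠ 0 := by positivity
  convert hf.norm_sq.sqrt h0' using 1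
  · simp only [Real.sqrt_sq (norm_nonneg _)]
  · rw [Real.sqrt_sq (norm_nonneg _)]
    ring

theorem inner_smul_div_norm_smul {u w : E} {δ : ℝ} (hδ : 0 < δ) :
    ⟪δ • w, u⟫ / ‖δ • w‖ = ⟪w, u⟫ / ‖w‖ := by
  rw [real_inner_smul_left, norm_smul, Real.norm_of_nonneg hδ.le, mul_div_mul_left _ _ hδ.ne']

theorem eventually_inner_div_norm_gt {u : E} (hu : u ≠ 0) {ε : ℝ} (hε : 0 < ε) :
    ∀ᶠ w in 𝓝 u, w ≠ 0 ∧ ‖u‖ - ε < ⟪w, u⟫ / ‖w‖ := by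
  have hcont : ContinuousAt (fun w : E => ⟪w, u⟫ / ‖w‖) u :=
    (continuous_id.inner continuous_const).continuousAt.div continuous_norm.continuousAt
      (norm_ne_zero_iff.2 hu)
  have hval : ⟪u, u⟫ / ‖u‖ = ‖u‖ := by
    rw [real_inner_self_eq_norm_sq, sq, mul_div_cancel_right₀ _ (norm_ne_zero_iff.2 hu)]
  refine (eventually_ne_nhds hu).and (hcont.eventually (lt_mem_nhds ?_))
  simpa only [hval] using sub_lt_self ‖u‖ hε

theorem exists_cone_inner_div_norm_gt {u : E} (hu : u ≠ 0) {ε : ℝ} (hε : 0 < ε) :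
    ∃ ρ > 0, ∀ δ > 0, ∀ w : E, ‖w - δ • u‖ < δ * ρ → w ≠ 0 ∧ ‖u‖ - ε < ⟪w, u⟫ / ‖w‖ := by
  obtain ⟨ρ, hρ, hball⟩ := Metric.eventually_nhds_iff.1 (eventually_inner_div_norm_gt hu hε)
  refine ⟨ρ, hρ, fun δ hδ w hw => ?_⟩
  have hdist : dist (δ⁻¹ • w) u < ρ := by
    rw [dist_eq_norm, ← inv_smul_smul₀ hδ.ne' u, ← smul_sub, norm_smul,
      Real.norm_of_nonneg (inv_nonneg.2 hδ.le), inv_mul_lt_iff₀ hδ]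
    exact hw
  obtain ⟨hne, hgt⟩ := hball hdist
  rw [← inner_smul_div_norm_smul hδ, smul_inv_smul₀ hδ.ne'] at hgt
  exact ⟨fun h => hne (by simp [h]), hgt⟩

theorem stmt_4_general {N : ℕ} {t : ℝ}
    (f : ℝ → EuclideanSpace ℝ (Fin N)) (f' : EuclideanSpace ℝ (Fin N))
    (hf : HasDerivAt f f' t) (hf' : f' ≠ 0) (ε : ℝ) (hε : 0 < ε) :
    ∃ δ₀ > 0, ∀ δ : ℝ, 0 < δ → δ < δ₀ →
      ∃ r > 0, ∀ x : EuclideanSpace ℝ (Fin N), ‖x - (f t - δ • f')‖ < r →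
        x ≠ f t ∧ deriv (fun s => ‖f s - x‖) t ≥ ‖f'‖ - ε := by
  obtain ⟨ρ, hρ, hcone⟩ := exists_cone_inner_div_norm_gt hf' hε
  refine ⟨1, one_pos, fun δ hδ _ => ⟨δ * ρ, mul_pos hδ hρ, fun x hx => ?_⟩⟩
  have hw : ‖(f t - x) - δ • f'‖ < δ * ρ := by
    rwa [show f t - x - δ • f' = -(x - (f t - δ • f')) by abel, norm_neg]
  obtain ⟨hne, hgt⟩ := hcone δ hδ (f t - x) hw
  refine ⟨fun h => hne (sub_eq_zero.2 h.symm), ?_⟩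
  rw [((hf.sub_const x).norm hne).deriv]
  exact hgt.le

/-- For `f` differentiable at `t` with `f'(t) ≠ 0` and `ε > 0`: for all
sufficiently small `δ > 0` and all `x` sufficiently close to `f t - δ f'(t)`,
one has `x ≠ f t` and `d/ds|ₜ ‖f s - x‖ ≥ ‖f'(t)‖ - ε`. -/
theorem stmt_4 {N : ℕ} {a b t : ℝ} (ht : t ∈ Set.Icc a b)
    (f : ℝ → EuclideanSpace ℝ (Fin N)) (f' : EuclideanSpace ℝ (Fin N))
    (hf : HasDerivAt f f' t) (hf' : f' ≠ 0) (ε : ℝ) (hε : 0 < ε) :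
    ∃ δ₀ > 0, ∀ δ : ℝ, 0 < δ → δ < δ₀ →
      ∃ r > 0, ∀ x : EuclideanSpace ℝ (Fin N), ‖x - (f t - δ • f')‖ < r →
        x ≠ f t ∧ deriv (fun s => ‖f s - x‖) t ≥ ‖f'‖ - ε :=
  stmt_4_general f f' hf hf' ε hε
end

section
/- Let f, g : [a,b] → ℝ^N be differentiable at a point t with f(t) ≠ g(t), and let D ⊂ ℝ^N be dense. Then sup over x ∈ D with x ≠ f(t) and x ≠ g(t) of | d/ds|_{s=t} |f(s) - x| − d/ds|_{s=t} |g(s) - x| | is at least max{|f'(t)|, |g'(t)|}. -/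
/-!
The derivative of `s ↦ ‖f s - x‖` at `t` is `⟪f' t, f t - x⟫ / ‖f t - x‖`, which is continuous in
`x` away from `f t` and `g t`, so the supremum over the dense set `D` is the supremum over all
`x ∉ {f t, g t}`. Approaching `f t` from both sides along `f' t`, the `f`-term is `±‖f' t‖` while
the `g`-term tends to a common limit, so one of the two differences is nearly `‖f' t‖` in
absolute value.
-/

open Filter Topology
open scoped RealInnerProductSpace

theorem le_csSup_image_inter_of_dense {X α : Type*} [TopologicalSpace X]
    [ConditionallyCompleteLattice α] [TopologicalSpace α] [ClosedIicTopology α]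
    {φ : X → α} {D U : Set X} (hD : Dense D) (hU : IsOpen U) (hφ : BddAbove (φ '' (U ∩ D)))
    {p : X} (hp : p ∈ U) (hφp : ContinuousAt φ p) : φ p ≤ sSup (φ '' (U ∩ D)) :=
  closure_minimal (fun _ hr => le_csSup hφ hr) isClosed_Iic
    (mem_closure_image hφp (hD.open_subset_closure_inter hU hp))

section RadialSpeed

variable {E : Type*} [NormedAddCommGroup E] [InnerProductSpace ℝ E]

noncomputable def radialSpeed (v y x : E) : ℝ := ⟪v, y - x⟫ / ‖y - x‖

theorem HasDerivAt.norm_sub_const {f : ℝ → E} {f' x : E} {t : ℝ} (hf : HasDerivAt f f' t)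
    (hx : f t ≠ x) : HasDerivAt (fun s => ‖f s - x‖) (radialSpeed f' (f t) x) t := by
  have hpos : 0 < ‖f t - x‖ := norm_pos_iff.mpr (sub_ne_zero.mpr hx)
  have hsq := (hf.sub_const x).norm_sq.sqrt (pow_pos hpos 2).ne'
  simp only [Real.sqrt_sq (norm_nonneg _)] at hsq
  convert hsq using 1
  rw [radialSpeed, real_inner_comm]
  field_simp

theorem abs_radialSpeed_le (v y x : E) : |radialSpeed v y x| ≤ ‖v‖ := by
  rcases eq_or_ne y x with rfl | hyx
  · simp [radialSpeed]
  rw [radialSpeed, abs_div, abs_norm, div_le_iff₀ (norm_pos_iff.mpr (sub_ne_zero.mpr hyx))]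
  exact abs_real_inner_le_norm v (y - x)

theorem continuousAt_radialSpeed (v : E) {y x : E} (hyx : y ≠ x) :
    ContinuousAt (radialSpeed v y) x := by
  have hcont : Continuous fun x : E => y - x := continuous_const.sub continuous_id
  exact (continuous_const.inner hcont).continuousAt.div hcont.norm.continuousAt
    (norm_ne_zero_iff.mpr (sub_ne_zero.mpr hyx))

theorem radialSpeed_sub_smul (v y : E) {s : ℝ} (hs : 0 < s) :
    radialSpeed v y (y - s • v) = ‖v‖ := by
  rcases eq_or_ne v 0 with rfl | hv
  · simp [radialSpeed]
  rw [radialSpeed, sub_sub_cancel, real_inner_smul_right, real_inner_self_eq_norm_sq,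
    norm_smul, Real.norm_of_nonneg hs.le]
  field_simp

theorem radialSpeed_add_smul (v y : E) {s : ℝ} (hs : 0 < s) :
    radialSpeed v y (y + s • v) = -‖v‖ := by
  rcases eq_or_ne v 0 with rfl | hv
  · simp [radialSpeed]
  rw [radialSpeed, sub_add_cancel_left, inner_neg_right, real_inner_smul_right,
    real_inner_self_eq_norm_sq, norm_neg, norm_smul, Real.norm_of_nonneg hs.le]
  field_simp

theorem bddAbove_abs_radialSpeed_sub (v w y z : E) (S : Set E) :
    BddAbove ((fun x => |radialSpeed v y x - radialSpeed w z x|) '' S) :=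
  ⟨‖v‖ + ‖w‖, Set.forall_mem_image.mpr fun x _ =>
    (abs_sub _ _).trans (add_le_add (abs_radialSpeed_le v y x) (abs_radialSpeed_le w z x))⟩

theorem norm_le_sSup_abs_radialSpeed_sub (v w : E) {y z : E} (hyz : y ≠ z) {D : Set E}
    (hD : Dense D) :
    ‖v‖ ≤ sSup ((fun x => |radialSpeed v y x - radialSpeed w z x|) '' ({y, z}ᶜ ∩ D)) := by
  set Φ := fun x => |radialSpeed v y x - radialSpeed w z x|
  set M := sSup (Φ '' ({y, z}ᶜ ∩ D))
  rcases eq_or_ne v 0 with rfl | hv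
  · simpa using Real.sSup_nonneg (Set.forall_mem_image.mpr fun x _ => abs_nonneg _)
  have hΦ : ∀ p ∉ ({y, z} : Set E), Φ p ≤ M := fun p hp =>
    le_csSup_image_inter_of_dense hD (Set.Finite.isClosed (by simp)).isOpen_compl
      (bddAbove_abs_radialSpeed_sub v w y z _) hp
      (((continuousAt_radialSpeed v fun h => hp (.inl h.symm)).sub
        (continuousAt_radialSpeed w fun h => hp (.inr h.symm))).abs)
  set B := radialSpeed w z
  have hB : ContinuousAt B y := continuousAt_radialSpeed w hyz.symm
  have hm : Tendsto (fun s : ℝ => y - s • v) (𝓝[>] 0) (𝓝 y) :=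
    ((continuous_const.sub (continuous_id.smul continuous_const)).tendsto' 0 y
      (by simp)).mono_left nhdsWithin_le_nhds
  have hp : Tendsto (fun s : ℝ => y + s • v) (𝓝[>] 0) (𝓝 y) :=
    ((continuous_const.add (continuous_id.smul continuous_const)).tendsto' 0 y
      (by simp)).mono_left nhdsWithin_le_nhds
  have hlim : Tendsto (fun s : ℝ => 2 * ‖v‖ - |B (y - s • v) - B (y + s • v)|) (𝓝[>] 0)
      (𝓝 (2 * ‖v‖)) := by
    simpa using tendsto_const_nhds.sub
      ((hB.tendsto.comp hm).sub (hB.tendsto.comp hp)).abs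
  have hle : ∀ᶠ s in 𝓝[>] (0 : ℝ), 2 * ‖v‖ - |B (y - s • v) - B (y + s • v)| ≤ 2 * M := by
    filter_upwards [hm.eventually_ne hyz, hp.eventually_ne hyz, self_mem_nhdsWithin]
      with s hmz hpz (hs : 0 < s)
    have hsv : s • v ≠ 0 := smul_ne_zero hs.ne' hv
    have h1 := hΦ (y - s • v) (by simp [hmz, hsv])
    have h2 := hΦ (y + s • v) (by simp [hpz, hsv])
    simp only [Φ, radialSpeed_sub_smul v y hs, radialSpeed_add_smul v y hs] at h1 h2
    linarith [le_abs_self (‖v‖ - B (y - s • v)), neg_le_abs (-‖v‖ - B (y + s • v)),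
      le_abs_self (B (y - s • v) - B (y + s • v))]
  linarith [le_of_tendsto hlim hle]

theorem max_norm_le_sSup_abs_radialSpeed_sub (v w : E) {y z : E} (hyz : y ≠ z) {D : Set E}
    (hD : Dense D) :
    max ‖v‖ ‖w‖ ≤
      sSup ((fun x => |radialSpeed v y x - radialSpeed w z x|) '' ({y, z}ᶜ ∩ D)) := by
  refine max_le (norm_le_sSup_abs_radialSpeed_sub v w hyz hD) ?_
  simpa only [Set.pair_comm z y, abs_sub_comm (radialSpeed w z _)] using
    norm_le_sSup_abs_radialSpeed_sub w v hyz.symm hD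

end RadialSpeed

theorem stmt_5_general {N : ℕ} {t : ℝ}
    (f g : ℝ → EuclideanSpace ℝ (Fin N)) (f' g' : EuclideanSpace ℝ (Fin N))
    (hf : HasDerivAt f f' t) (hg : HasDerivAt g g' t) (hfg : f t ≠ g t)
    (D : Set (EuclideanSpace ℝ (Fin N))) (hD : Dense D) :
    max ‖f'‖ ‖g'‖ ≤
      sSup {r : ℝ | ∃ x ∈ D, x ≠ f t ∧ x ≠ g t ∧
        r = |deriv (fun s => ‖f s - x‖) t - deriv (fun s => ‖g s - x‖) t|} := by
  have hderiv : ∀ x, x ≠ f t → x ≠ g t →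
      |deriv (fun s => ‖f s - x‖) t - deriv (fun s => ‖g s - x‖) t| =
        |radialSpeed f' (f t) x - radialSpeed g' (g t) x| := fun x hxf hxg => by
    rw [(hf.norm_sub_const hxf.symm).deriv, (hg.norm_sub_const hxg.symm).deriv]
  convert max_norm_le_sSup_abs_radialSpeed_sub f' g' hfg hD using 2
  ext r
  simp only [Set.mem_ofPred_eq, Set.mem_image, Set.mem_inter_iff, Set.mem_compl_iff,
    Set.mem_insert_iff, Set.mem_singleton_iff, not_or]
  constructor
  · rintro ⟨x, hxD, hxf, hxg, rfl⟩
    exact ⟨x, ⟨⟨hxf, hxg⟩, hxD⟩, (hderiv x hxf hxg).symm⟩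
  · rintro ⟨x, ⟨⟨hxf, hxg⟩, hxD⟩, rfl⟩
    exact ⟨x, hxD, hxf, hxg, (hderiv x hxf hxg).symm⟩

/-- If `f, g` are differentiable at `t` with `f t ≠ g t` and `D ⊆ ℝ^N` is dense,
then the supremum over `x ∈ D`, `x ≠ f t`, `x ≠ g t`, of
`|d/ds|ₜ‖f s - x‖ - d/ds|ₜ‖g s - x‖|` is at least `max {‖f'(t)‖, ‖g'(t)‖}`. -/
theorem stmt_5 {N : ℕ} {a b t : ℝ} (ht : t ∈ Set.Icc a b)
    (f g : ℝ → EuclideanSpace ℝ (Fin N)) (f' g' : EuclideanSpace ℝ (Fin N))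
    (hf : HasDerivAt f f' t) (hg : HasDerivAt g g' t) (hfg : f t ≠ g t)
    (D : Set (EuclideanSpace ℝ (Fin N))) (hD : Dense D) :
    max ‖f'‖ ‖g'‖ ≤
      sSup {r : ℝ | ∃ x ∈ D, x ≠ f t ∧ x ≠ g t ∧
        r = |deriv (fun s => ‖f s - x‖) t - deriv (fun s => ‖g s - x‖) t|} :=
  stmt_5_general f g f' g' hf hg hfg D hD
end

section
/- Let f : [a,b] → V be Lipschitz with constant L, where V = Y* is the dual of a separable Banach space Y. Then for almost every x ∈ (a,b) there exists f'(x) ∈ V with ‖f'(x)‖ ≤ L such that ⟨v, (f(x+h) - f(x))/h⟩ → ⟨v, f'(x)⟩ as h → 0 for every v ∈ Y. -/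
/-!
Fix a dense sequence `uₙ` in `Y`. Each scalar function `t ↦ f t uₙ` is Lipschitz, hence
differentiable almost everywhere, so for almost every `x` the difference quotients
`h⁻¹ • (f (x + h) - f x)` converge at every `uₙ`. These quotients eventually lie in the closed
ball of radius `L`, which is compact for pointwise convergence (Banach–Alaoglu). A cluster point
of the quotients is a continuous functional determined by its values on the dense sequence, so
the cluster point is unique and the quotients converge to it pointwise.
-/

open MeasureTheory Filter Topology Set Metric

theorem ContinuousLinearMap.exists_tendsto_apply_of_dense {𝕜 E F ι : Type*}
    [NontriviallyNormedField 𝕜] [NormedAddCommGroup E] [NormedSpace 𝕜 E]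
    [NormedAddCommGroup F] [NormedSpace 𝕜 F] [ProperSpace F]
    {l : Filter ι} [l.NeBot] {q : ι → E →L[𝕜] F} {C : ℝ} (hq : ∀ᶠ i in l, ‖q i‖ ≤ C)
    {s : Set E} (hs : Dense s) (hconv : ∀ v ∈ s, ∃ c, Tendsto (fun i ↦ q i v) l (𝓝 c)) :
    ∃ φ : E →L[𝕜] F, ‖φ‖ ≤ C ∧ ∀ v, Tendsto (fun i ↦ q i v) l (𝓝 (φ v)) := by
  set K := ((↑) : (E →L[𝕜] F) → E → F) '' closedBall 0 C
  have hK : IsCompact K := isCompact_image_coe_closedBall 0 C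
  have hqK : ∀ᶠ i in l, ⇑(q i) ∈ K :=
    hq.mono fun i hi ↦ ⟨q i, mem_closedBall_zero_iff.2 hi, rfl⟩
  obtain ⟨_, ⟨φ, hφC, rfl⟩, hφ⟩ := hK.exists_mapClusterPt (le_principal_iff.2 hqK)
  have hunique : ∀ g ∈ K, MapClusterPt g l (fun i ↦ ⇑(q i)) → g = φ := by
    rintro _ ⟨ψ, -, rfl⟩ hψ
    refine Continuous.ext_on hs ψ.continuous φ.continuous fun v hv ↦ ?_
    obtain ⟨c, hc⟩ := hconv v hv
    have hψv := hψ.tendsto_comp (continuous_apply v).continuousAt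
    have hφv := hφ.tendsto_comp (continuous_apply v).continuousAt
    exact (eq_of_nhds_neBot (hψv.clusterPt.mono hc)).trans
      (eq_of_nhds_neBot (hφv.clusterPt.mono hc)).symm
  have hlim := hK.tendsto_nhds_of_unique_mapClusterPt hqK hunique
  exact ⟨φ, mem_closedBall_zero_iff.1 hφC, fun v ↦ tendsto_pi_nhds.1 hlim v⟩

theorem LipschitzOnWith.norm_inv_smul_sub_le {E : Type*} [SeminormedAddCommGroup E]
    [NormedSpace ℝ E] {f : ℝ → E} {K : NNReal} {s : Set ℝ} (hf : LipschitzOnWith K f s)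
    {x y : ℝ} (hx : x ∈ s) (hy : y ∈ s) : ‖(y - x)⁻¹ • (f y - f x)‖ ≤ K := by
  rw [norm_smul, norm_inv, ← dist_eq_norm, ← dist_eq_norm]
  exact inv_mul_le_of_le_mul₀ dist_nonneg K.coe_nonneg
    ((hf.dist_le_mul y hy x hx).trans_eq (mul_comm _ _))

theorem stmt_12_general {Y : Type*} [NormedAddCommGroup Y] [NormedSpace ℝ Y]
    [TopologicalSpace.SeparableSpace Y]
    (a b : ℝ) (L : NNReal) (f : ℝ → (Y →L[ℝ] ℝ))
    (hf : LipschitzOnWith L f (Set.Icc a b)) :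
    ∀ᵐ x ∂(volume.restrict (Set.Ioo a b)),
      ∃ f' : Y →L[ℝ] ℝ, ‖f'‖ ≤ L ∧ ∀ v : Y,
        Tendsto (fun h : ℝ => (f (x + h) v - f x v) / h)
          (nhdsWithin 0 {0}ᶜ) (nhds (f' v)) := by
  obtain ⟨u, hu⟩ := TopologicalSpace.exists_dense_seq Y
  have hfI : LipschitzOnWith L f (Ioo a b) := hf.mono Ioo_subset_Icc_self
  have hdiff : ∀ᵐ x ∂(volume.restrict (Ioo a b)),
      ∀ n, DifferentiableWithinAt ℝ (fun t ↦ f t (u n)) (Ioo a b) x :=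
    ae_all_iff.2 fun n ↦ ((ContinuousLinearMap.apply ℝ ℝ (u n)).lipschitz.comp_lipschitzOnWith
      hfI).ae_differentiableWithinAt_real measurableSet_Ioo
  filter_upwards [hdiff, ae_restrict_mem measurableSet_Ioo] with x hdiff hx
  have hIoo : Ioo a b ∈ 𝓝 x := Ioo_mem_nhds hx.1 hx.2
  have hxh : ∀ᶠ h in 𝓝[≠] (0 : ℝ), x + h ∈ Ioo a b :=
    nhdsWithin_le_nhds <| (continuous_const_add x).tendsto' 0 x (add_zero x) hIoo
  obtain ⟨φ, hφ, hlim⟩ := ContinuousLinearMap.exists_tendsto_apply_of_dense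
    (q := fun h ↦ h⁻¹ • (f (x + h) - f x)) (C := L)
    (hxh.mono fun h hh ↦ by simpa using hfI.norm_inv_smul_sub_le hx hh) hu
    (forall_mem_range.2 fun n ↦
      ⟨_, ((hdiff n).differentiableAt hIoo).hasDerivAt.tendsto_slope_zero⟩)
  exact ⟨φ, hφ, fun v ↦ (hlim v).congr fun h ↦ by simp [div_eq_inv_mul]⟩

/-- A Lipschitz map from `[a,b]` into the dual of a separable Banach space
has a w*-derivative of norm at most the Lipschitz constant almost everywhere. -/
theorem stmt_12 {Y : Type*} [NormedAddCommGroup Y] [NormedSpace ℝ Y]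
    [CompleteSpace Y] [TopologicalSpace.SeparableSpace Y]
    (a b : ℝ) (L : NNReal) (f : ℝ → (Y →L[ℝ] ℝ))
    (hf : LipschitzOnWith L f (Set.Icc a b)) :
    ∀ᵐ x ∂(volume.restrict (Set.Ioo a b)),
      ∃ f' : Y →L[ℝ] ℝ, ‖f'‖ ≤ L ∧ ∀ v : Y,
        Tendsto (fun h : ℝ => (f (x + h) v - f x v) / h)
          (nhdsWithin 0 {0}ᶜ) (nhds (f' v)) :=
  stmt_12_general a b L f hf
end
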